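/- arXiv:1305.2624 — 2 statements merged into one kernel-verified Lean document; each statement's English description precedes it below -/
import Mathlib

section
/- For all real numbers $w, r$ with $0 < w \le r$, the iterated integral $\int_0^{\pi} \int_0^{2\pi} \int_0^{r} \rho \cdot \mathbf{1}[\rho\,|\sin\varphi| \ge w]\; d\rho\, d\varphi\, d\psi$ equals $2\pi r^2 \left(\arccos(w/r) - (w/r)\sqrt{1-(w/r)^2}\right)$, i.e. it equals $\delta(w/r) \cdot \pi^2 r^2$ where $\delta(\nu) = \frac{2}{\pi}\left(\arccos\nu - \nu\sqrt{1-\nu^2}\right)$. -/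
/-!
For fixed `φ` the `ρ`-integral is `(r² - w² / sin² φ) / 2` where `r |sin φ| ≥ w` and `0` elsewhere,
a continuous function of `|sin φ|`. Since `|sin|` is `π`-periodic and symmetric about `π / 2`, the
`φ`-integral over `[0, 2π]` is four times the one over `[0, π / 2]`; there the integrand vanishes
below `arcsin (w / r)` and has the antiderivative `(r² φ + w² cot φ) / 2` above it. The `ψ`-integral only contributes a factor `π`.
-/

open Real MeasureTheory

noncomputable def mushroomDelta (ν : ℝ) : ℝ :=
  2 / Real.pi * (Real.arccos ν - ν * Real.sqrt (1 - ν ^ 2))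

open intervalIntegral Set

theorem integral_ite_le_id {c r : ℝ} (hc : 0 ≤ c) (hcr : c ≤ r) :
    ∫ ρ in (0:ℝ)..r, (if c ≤ ρ then ρ else 0) = (r ^ 2 - c ^ 2) / 2 := by
  have hsets : (Ioc 0 r ∩ Ici c : Set ℝ) =ᵐ[volume] Ioc c r := by
    have : Ioc 0 r ∩ Ioi c = Ioc c r := by
      ext ρ
      simp only [mem_inter_iff, mem_Ioc, mem_Ioi]
      exact ⟨fun h => ⟨h.2, h.1.2⟩, fun h => ⟨⟨by linarith [h.1], h.2⟩, h.1⟩⟩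
    rw [← this]
    exact (ae_eq_refl _).inter Ioi_ae_eq_Ici.symm
  calc ∫ ρ in (0:ℝ)..r, (if c ≤ ρ then ρ else 0)
      = ∫ ρ in Ioc 0 r, (Ici c).indicator id ρ := by
        rw [integral_of_le (hc.trans hcr)]; rfl
    _ = ∫ ρ in c..r, ρ := by
        rw [setIntegral_indicator measurableSet_Ici, setIntegral_congr_set hsets,
          integral_of_le hcr]
        rfl
    _ = (r ^ 2 - c ^ 2) / 2 := integral_id

noncomputable def radialSection (w r s : ℝ) : ℝ :=
  if w ≤ r * s then (r ^ 2 - (w / s) ^ 2) / 2 else 0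

theorem integral_ite_le_mul {w r s : ℝ} (hw : 0 < w) (hr : 0 ≤ r) (hs : 0 ≤ s) :
    ∫ ρ in (0:ℝ)..r, (if w ≤ ρ * s then ρ else 0) = radialSection w r s := by
  unfold radialSection
  split_ifs with h
  · have hs : 0 < s := hs.lt_of_ne (by rintro rfl; linarith [mul_zero r])
    simp only [← div_le_iff₀ hs]
    exact integral_ite_le_id (div_nonneg hw.le hs.le) ((div_le_iff₀ hs).2 h)
  · rw [integral_congr (g := fun _ => 0), intervalIntegral.integral_zero]
    intro ρ hρ
    rw [uIcc_of_le hr] at hρ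
    have : ρ * s ≤ r * s := mul_le_mul_of_nonneg_right hρ.2 hs
    exact if_neg fun h' => h (h'.trans this)

theorem radialSection_eq_zero_of_mul_le {w r s : ℝ} (hw : 0 < w) (h : r * s ≤ w) :
    radialSection w r s = 0 := by
  unfold radialSection
  split_ifs with h'
  · have hrs : r * s = w := le_antisymm h h'
    have hs : s ≠ 0 := by rintro rfl; linarith [mul_zero r]
    rw [← hrs, mul_div_cancel_right₀ r hs, sub_self, zero_div]
  · rfl

-- Both branches vanish on `r * s = w`, and `w > 0` keeps the first branch away from `s = 0`.
theorem continuous_radialSection {w : ℝ} (hw : 0 < w) (r : ℝ) :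
    Continuous (radialSection w r) := by
  refine continuous_if_le continuous_const (continuous_const_mul r) ?_ continuousOn_const
    fun s hs => (if_pos hs.le).symm.trans (radialSection_eq_zero_of_mul_le hw hs.ge)
  intro s hs
  have hs0 : s ≠ 0 := by rintro rfl; linarith [hs.out, mul_zero r]
  apply ContinuousAt.continuousWithinAt
  fun_prop (disch := exact hs0)

theorem intervalIntegrable_radialSection_abs_sin {w : ℝ} (hw : 0 < w) (r a b : ℝ) :
    IntervalIntegrable (fun x => radialSection w r |sin x|) volume a b :=
  ((continuous_radialSection hw r).comp continuous_sin.abs).intervalIntegrable a b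

theorem hasDerivAt_mul_add_cot {w r x : ℝ} (hx : sin x ≠ 0) :
    HasDerivAt (fun y => (r ^ 2 * y + w ^ 2 * (cos y / sin y)) / 2)
      ((r ^ 2 - (w / sin x) ^ 2) / 2) x := by
  have hcot := (hasDerivAt_cos x).div (hasDerivAt_sin x) hx
  refine ((((hasDerivAt_id x).const_mul (r ^ 2)).add (hcot.const_mul (w ^ 2))).div_const 2)
    |>.congr_deriv ?_
  field_simp
  linear_combination (-w ^ 2) * sin_sq_add_cos_sq x

theorem integral_eq_two_mul_integral_half {f : ℝ → ℝ} {T : ℝ} (hf : ∀ x, f (T - x) = f x)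
    (hint : ∀ a b, IntervalIntegrable f volume a b) :
    ∫ x in (0:ℝ)..T, f x = 2 * ∫ x in (0:ℝ)..T / 2, f x := by
  have hupper : ∫ x in T / 2..T, f x = ∫ x in (0:ℝ)..T / 2, f x :=
    calc ∫ x in T / 2..T, f x = ∫ x in T / 2..T, f (T - x) := by simp only [hf]
      _ = ∫ x in (0:ℝ)..T / 2, f x := by rw [integral_comp_sub_left, sub_self, sub_half]
  rw [← integral_add_adjacent_intervals (hint 0 (T / 2)) (hint (T / 2) T), hupper, two_mul]

theorem integral_radialSection_abs_sin_zero_pi_div_two {w r : ℝ} (hw : 0 < w) (hwr : w ≤ r) :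
    ∫ x in (0:ℝ)..π / 2, radialSection w r |sin x| =
      r ^ 2 / 2 * (arccos (w / r) - w / r * √(1 - (w / r) ^ 2)) := by
  have hr : 0 < r := hw.trans_le hwr
  set ν := w / r
  have hν0 : 0 < ν := div_pos hw hr
  set α := arcsin ν with hα
  have hsinα : sin α = ν := sin_arcsin (by linarith) ((div_le_one hr).2 hwr)
  have hcosα : cos α = √(1 - ν ^ 2) := cos_arcsin ν
  have hα0 : 0 ≤ α := arcsin_nonneg.2 hν0.le
  have hα2 : α ≤ π / 2 := arcsin_le_pi_div_two ν
  have hint := intervalIntegrable_radialSection_abs_sin hw r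
  have hzero : EqOn (fun x => radialSection w r |sin x|) 0 (uIcc 0 α) := by
    intro x hx
    rw [uIcc_of_le hα0] at hx
    have hsin : |sin x| ≤ ν := by
      rw [abs_of_nonneg (sin_nonneg_of_nonneg_of_le_pi hx.1 (by linarith [pi_pos, hx.2])),
        ← hsinα]
      exact sin_le_sin_of_le_of_le_pi_div_two (by linarith [pi_pos, hx.1]) hα2 hx.2
    exact radialSection_eq_zero_of_mul_le hw ((le_div_iff₀' hr).1 hsin)
  have hderiv : ∀ x ∈ uIcc α (π / 2),
      HasDerivAt (fun y => (r ^ 2 * y + w ^ 2 * (cos y / sin y)) / 2)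
        (radialSection w r |sin x|) x := by
    intro x hx
    rw [uIcc_of_le hα2] at hx
    have hsin : ν ≤ sin x := by
      rw [← hsinα]
      exact sin_le_sin_of_le_of_le_pi_div_two (by linarith [pi_pos, hα0]) hx.2 hx.1
    have hpos : 0 < sin x := hν0.trans_le hsin
    rw [abs_of_pos hpos, radialSection, if_pos ((div_le_iff₀' hr).1 hsin)]
    exact hasDerivAt_mul_add_cot hpos.ne'
  rw [← integral_add_adjacent_intervals (hint 0 α) (hint α (π / 2)), integral_congr hzero,
    integral_eq_sub_of_hasDerivAt hderiv (hint α (π / 2))]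
  simp only [Pi.zero_apply, intervalIntegral.integral_zero, zero_add, sin_pi_div_two,
    cos_pi_div_two, hsinα, hcosα, arccos_eq_pi_div_two_sub_arcsin, ← hα]
  have hw_eq : w = ν * r := (div_mul_cancel₀ w hr.ne').symm
  rw [hw_eq]
  field_simp
  ring

theorem integral_radialSection_abs_sin {w r : ℝ} (hw : 0 < w) (hwr : w ≤ r) :
    ∫ x in (0:ℝ)..2 * π, radialSection w r |sin x| =
      2 * r ^ 2 * (arccos (w / r) - w / r * √(1 - (w / r) ^ 2)) := by
  have hint := intervalIntegrable_radialSection_abs_sin hw r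
  have hper : Function.Periodic (fun x => radialSection w r |sin x|) π := fun x => by
    simp only [sin_add_pi, abs_neg]
  have htwo := hper.intervalIntegral_add_zsmul_eq 2 0 hint
  simp only [zero_add, zsmul_eq_mul, Int.cast_ofNat] at htwo
  rw [htwo, integral_eq_two_mul_integral_half (fun x => by simp only [sin_pi_sub]) hint,
    integral_radialSection_abs_sin_zero_pi_div_two hw hwr]
  ring

theorem volume_elliptic_island (w r : ℝ) (hw : 0 < w) (hwr : w ≤ r) :
    (∫ ψ in (0:ℝ)..Real.pi, ∫ φ in (0:ℝ)..(2 * Real.pi), ∫ ρ in (0:ℝ)..r,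
        (if w ≤ ρ * |Real.sin φ| then ρ else 0)) =
      2 * Real.pi * r ^ 2 *
        (Real.arccos (w / r) - (w / r) * Real.sqrt (1 - (w / r) ^ 2)) ∧
    2 * Real.pi * r ^ 2 *
        (Real.arccos (w / r) - (w / r) * Real.sqrt (1 - (w / r) ^ 2)) =
      mushroomDelta (w / r) * (Real.pi ^ 2 * r ^ 2) := by
  have hinner (φ : ℝ) : ∫ ρ in (0:ℝ)..r, (if w ≤ ρ * |sin φ| then ρ else 0) =
      radialSection w r |sin φ| :=
    integral_ite_le_mul hw (hw.le.trans hwr) (abs_nonneg _)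
  refine ⟨?_, ?_⟩
  · simp only [hinner, intervalIntegral.integral_const, integral_radialSection_abs_sin hw hwr,
      sub_zero, smul_eq_mul]
    ring
  · rw [mushroomDelta]
    field_simp
end

section
/- Fix $\varphi \in (0, \pi/2)$. Let $f, g : \mathbb{R} \to \mathbb{R}$ be functions such that, as $\varepsilon \to 0$, $f(\varepsilon) - \varphi - 2\varepsilon\sin\varphi = O(\varepsilon^2)$ and $g(\varepsilon) - 1 - 2\varepsilon\cos\varphi = O(\varepsilon^2)$. Then, as $\varepsilon \to 0$, $\arcsin\!\left(\frac{\sin f(\varepsilon)}{g(\varepsilon)}\right) - \varphi = O(\varepsilon^2)$. -/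
open Real Asymptotics Filter Topology

/-! The expansions `sin f = sin φ + 2ε sin φ cos φ + O(ε²)` and `sin φ · g = sin φ + 2ε sin φ cos φ + O(ε²)`
have the same first-order term, so `sin f / g = sin φ + O(ε²)`; since `arcsin` is differentiable at
`sin φ ∈ (-1, 1)`, applying it loses nothing more. -/

namespace Real

lemma cos_sub_one_isBigO_sq : (fun t : ℝ => cos t - 1) =O[𝓝 0] fun t => t ^ 2 :=
  IsBigO.of_bound (1 / 2) <| Eventually.of_forall fun t => by
    rw [norm_of_nonpos (by linarith [cos_le_one t]), norm_of_nonneg (sq_nonneg t)]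
    linarith [one_sub_sq_div_two_le_cos (x := t)]

lemma sin_sub_self_isBigO_sq : (fun t : ℝ => sin t - t) =O[𝓝 0] fun t => t ^ 2 := by
  have hcube : (fun t : ℝ => sin t - t) =O[𝓝 0] fun t => t ^ 3 :=
    IsBigO.of_bound (1 / 6) <| Eventually.of_forall fun t => by
      rw [norm_eq_abs, abs_sub_comm, norm_pow, norm_eq_abs]
      linarith [abs_sub_sin_le t]
  exact hcube.trans (isLittleO_pow_pow (by norm_num)).isBigO

lemma sin_add_sub_sin_sub_cos_mul_isBigO_sq (a : ℝ) :
    (fun h : ℝ => sin (a + h) - sin a - cos a * h) =O[𝓝 0] fun h => h ^ 2 :=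
  ((cos_sub_one_isBigO_sq.const_mul_left (sin a)).add
    (sin_sub_self_isBigO_sq.const_mul_left (cos a))).congr_left fun h => by rw [sin_add]; ring

end Real

section Expansions

variable {α : Type*} {l : Filter α} {e : α → ℝ}

lemma isBigO_sub_of_sub_sub_const_mul_isBigO_sq {u : α → ℝ} {a c : ℝ} (he : Tendsto e l (𝓝 0))
    (h : (fun x => u x - a - c * e x) =O[l] fun x => e x ^ 2) :
    (fun x => u x - a) =O[l] e := by
  have hsq : (fun x => e x ^ 2) =O[l] e :=
    ((isBigO_refl e l).mul (he.isBigO_one ℝ)).congr (fun x => (sq (e x)).symm) fun x => mul_one _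
  exact ((h.trans hsq).add ((isBigO_refl e l).const_mul_left c)).congr_left fun x => by ring

lemma sin_sub_sin_sub_cos_mul_isBigO_sq {f : α → ℝ} {φ : ℝ} (he : Tendsto e l (𝓝 0))
    (hf : (fun x => f x - φ) =O[l] e) :
    (fun x => sin (f x) - sin φ - cos φ * (f x - φ)) =O[l] fun x => e x ^ 2 :=
  (((sin_add_sub_sin_sub_cos_mul_isBigO_sq φ).comp_tendsto (hf.trans_tendsto he)).trans
    (hf.pow 2)).congr_left fun x => by simp only [Function.comp_apply, add_sub_cancel]

lemma sin_sub_sin_mul_isBigO_sq {f g : α → ℝ} {φ : ℝ} (he : Tendsto e l (𝓝 0))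
    (hf : (fun x => f x - φ - 2 * e x * sin φ) =O[l] fun x => e x ^ 2)
    (hg : (fun x => g x - 1 - 2 * e x * cos φ) =O[l] fun x => e x ^ 2) :
    (fun x => sin (f x) - sin φ * g x) =O[l] fun x => e x ^ 2 := by
  have hf₁ : (fun x => f x - φ) =O[l] e :=
    isBigO_sub_of_sub_sub_const_mul_isBigO_sq (c := 2 * sin φ) he (hf.congr_left fun x => by ring)
  exact (((sin_sub_sin_sub_cos_mul_isBigO_sq he hf₁).add (hf.const_mul_left (cos φ))).sub
    (hg.const_mul_left (sin φ))).congr_left fun x => by ring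

end Expansions

lemma div_sub_isBigO_of_sub_mul_isBigO {α 𝕜 : Type*} [NormedField 𝕜] {l : Filter α}
    {u g k : α → 𝕜} {b c : 𝕜} (hg : Tendsto g l (𝓝 b)) (hb : b ≠ 0)
    (h : (fun x => u x - c * g x) =O[l] k) :
    (fun x => u x / g x - c) =O[l] k := by
  refine (h.mul ((hg.inv₀ hb).isBigO_one 𝕜)).congr' ?_ (Eventually.of_forall fun x => mul_one _)
  filter_upwards [hg.eventually_ne hb] with x hx
  field_simp

lemma Real.arcsin_sub_isBigO_of_sub_sin_isBigO {α : Type*} {l : Filter α} {y k : α → ℝ} {φ : ℝ}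
    (hφ : φ ∈ Set.Ioo (-(π / 2)) (π / 2)) (hy : (fun x => y x - sin φ) =O[l] k)
    (hk : Tendsto k l (𝓝 0)) :
    (fun x => arcsin (y x) - φ) =O[l] k := by
  obtain ⟨hφ₀, hφ₁⟩ := hφ
  have hsin : sin φ ∈ Set.Ioo (-1) 1 := by
    constructor
    · simpa using sin_lt_sin_of_lt_of_le_pi_div_two le_rfl hφ₁.le hφ₀
    · simpa using sin_lt_sin_of_lt_of_le_pi_div_two hφ₀.le le_rfl hφ₁
  have hd : DifferentiableAt ℝ arcsin (sin φ) := differentiableAt_arcsin.2 ⟨hsin.1.ne', hsin.2.ne⟩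
  have hyφ : Tendsto y l (𝓝 (sin φ)) := tendsto_sub_nhds_zero_iff.1 (hy.trans_tendsto hk)
  exact ((hd.isBigO_sub.comp_tendsto hyφ).trans hy).congr_left fun x => by
    simp only [Function.comp_apply, arcsin_sin hφ₀.le hφ₁.le]

theorem impact_angle_adiabatic_invariant (φ : ℝ) (hφ : φ ∈ Set.Ioo 0 (Real.pi / 2))
    (f g : ℝ → ℝ)
    (hf : (fun ε : ℝ => f ε - φ - 2 * ε * Real.sin φ) =O[nhds 0] fun ε : ℝ => ε ^ 2)
    (hg : (fun ε : ℝ => g ε - 1 - 2 * ε * Real.cos φ) =O[nhds 0] fun ε : ℝ => ε ^ 2) :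
    (fun ε : ℝ => Real.arcsin (Real.sin (f ε) / g ε) - φ)
      =O[nhds 0] fun ε : ℝ => ε ^ 2 := by
  have hε : Tendsto (fun ε : ℝ => ε) (𝓝 0) (𝓝 0) := tendsto_id
  have hg₁ : Tendsto g (𝓝 0) (𝓝 1) := tendsto_sub_nhds_zero_iff.1 <|
    (isBigO_sub_of_sub_sub_const_mul_isBigO_sq (c := 2 * cos φ) hε
      (hg.congr_left fun ε => by ring)).trans_tendsto hε
  have hquot : (fun ε => sin (f ε) / g ε - sin φ) =O[𝓝 0] fun ε : ℝ => ε ^ 2 :=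
    div_sub_isBigO_of_sub_mul_isBigO hg₁ one_ne_zero (sin_sub_sin_mul_isBigO_sq hε hf hg)
  have hsq : Tendsto (fun ε : ℝ => ε ^ 2) (𝓝 0) (𝓝 0) := by simpa using hε.pow 2
  exact arcsin_sub_isBigO_of_sub_sin_isBigO ⟨by linarith [hφ.1, pi_pos], hφ.2⟩ hquot hsq
end
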